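/- arXiv:1909.05591 — 2 statements merged into one kernel-verified Lean document; each statement's English description precedes it below -/
import Mathlib

section
/- Strong convexity of E* for generalized nested logit models: with G the GNL generating function as in the context, define E(u) = μ·ln G(e^{u⁽¹⁾}, …, e^{u⁽ⁿ⁾}) + μγ, where γ is Euler's constant. Then the convex conjugate E*(p) = sup_{u ∈ ℝⁿ}(⟨p,u⟩ − E(u)) is β-strongly convex on the simplex Δ with respect to the ℓ1-norm, with convexity parameter β = 1 / ( 2/(min_{ℓ∈L} μ_ℓ) − 1/μ ). -/
/-!
Along a line `t ↦ u + t • z`, `E` is a two-level log-sum-exp. Its second derivative is an inner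
Gibbs variance of `z` scaled by `1 / μ_ℓ` plus an outer Gibbs variance scaled by `1 / μ`, and
together these are at most `‖z‖∞² / m` with `m = min_ℓ μ_ℓ`: `E` is `1 / m`-smooth for the
sup norm. Comparing the supremum defining `E*` at `u` with its values at `u + (1 - α) z` and
`u - α z`, for `z = m ‖p - q‖₁ sign (p - q)`, turns this smoothness into `m`-strong convexity of
`E*` for the `ℓ1`-norm, and `1 / (2 / m - 1 / μ) ≤ m`. The bound `E u ≥ u i + log σ_iℓ + μγ`
keeps the suprema finite on the simplex.
-/

open Real Finset Set

theorem convexOn_univ_sq_sub_of_deriv2_le {f f' f'' : ℝ → ℝ} {C : ℝ}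
    (hf : ∀ t, HasDerivAt f (f' t) t) (hf' : ∀ t, HasDerivAt f' (f'' t) t)
    (hC : ∀ t, f'' t ≤ C) :
    ConvexOn ℝ univ (fun t => C / 2 * t ^ 2 - f t) := by
  have hd : ∀ t, HasDerivAt (fun t => C / 2 * t ^ 2 - f t) (C * t - f' t) t := fun t =>
    (((hasDerivAt_pow 2 t).const_mul (C / 2)).fun_sub (hf t)).congr_deriv (by norm_num; ring)
  have hd' : ∀ t, HasDerivAt (fun t => C * t - f' t) (C - f'' t) t := fun t =>
    (((hasDerivAt_id t).const_mul C).fun_sub (hf' t)).congr_deriv (by simp)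
  exact convexOn_of_hasDerivWithinAt2_nonneg convex_univ
    (continuous_iff_continuousAt.2 fun t => (hd t).continuousAt).continuousOn
    (fun t _ => (hd t).hasDerivWithinAt) (fun t _ => (hd' t).hasDerivWithinAt)
    fun t _ => sub_nonneg.2 (hC t)

lemma smul_add_le_of_convexOn_sq_sub {φ : ℝ → ℝ} {C : ℝ}
    (hφ : ConvexOn ℝ univ (fun t => C / 2 * t ^ 2 - φ t)) {α : ℝ} (hα0 : 0 ≤ α) (hα1 : α ≤ 1) :
    α * φ (1 - α) + (1 - α) * φ (-α) ≤ φ 0 + C / 2 * (α * (1 - α)) := by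
  have h := hφ.2 (mem_univ (1 - α)) (mem_univ (-α)) hα0 (sub_nonneg.2 hα1) (by ring)
  have h0 : α * (1 - α) + (1 - α) * -α = 0 := by ring
  simp only [smul_eq_mul, h0] at h
  linear_combination h

lemma exists_norm_le_dotProduct_eq {ι : Type*} [Fintype ι] {c : ℝ} (hc : 0 ≤ c) (v : ι → ℝ) :
    ∃ z : ι → ℝ, ‖z‖ ≤ c ∧ v ⬝ᵥ z = c * ∑ i, |v i| := by
  refine ⟨fun i => c * SignType.sign (v i), (pi_norm_le_iff_of_nonneg hc).2 fun i => ?_, ?_⟩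
  · rw [Real.norm_eq_abs, abs_mul, abs_of_nonneg hc]
    exact mul_le_of_le_one_right hc (by cases SignType.sign (v i) <;> simp)
  · simp only [dotProduct, mul_left_comm _ c, ← mul_sum, self_mul_sign]

section ConvexConjugate

variable {ι : Type*} [Fintype ι] {E : (ι → ℝ) → ℝ}

noncomputable def convexConjugate (E : (ι → ℝ) → ℝ) (p : ι → ℝ) : ℝ :=
  sSup {y | ∃ u : ι → ℝ, y = p ⬝ᵥ u - E u}

lemma bddAbove_convexConjugate_set {c p : ι → ℝ} (hE : ∀ u i, u i + c i ≤ E u)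
    (hp0 : ∀ i, 0 ≤ p i) (hp1 : ∑ i, p i = 1) :
    BddAbove {y | ∃ u : ι → ℝ, y = p ⬝ᵥ u - E u} := by
  refine ⟨-(p ⬝ᵥ c), ?_⟩
  rintro _ ⟨u, rfl⟩
  have hle : p ⬝ᵥ (u + c) ≤ E u :=
    calc p ⬝ᵥ (u + c) ≤ ∑ i, p i * E u :=
          sum_le_sum fun i _ => mul_le_mul_of_nonneg_left (hE u i) (hp0 i)
      _ = E u := by rw [← sum_mul, hp1, one_mul]
  rw [dotProduct_add] at hle
  linarith

theorem convexConjugate_smul_add_le {β : ℝ} (hβ : 0 < β)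
    (hE : ∀ u z : ι → ℝ, ConvexOn ℝ univ (fun t => ‖z‖ ^ 2 / β / 2 * t ^ 2 - E (u + t • z)))
    {p q : ι → ℝ} (hp : BddAbove {y | ∃ u : ι → ℝ, y = p ⬝ᵥ u - E u})
    (hq : BddAbove {y | ∃ u : ι → ℝ, y = q ⬝ᵥ u - E u}) {α : ℝ} (hα0 : 0 ≤ α) (hα1 : α ≤ 1) :
    convexConjugate E (α • p + (1 - α) • q)
      ≤ α * convexConjugate E p + (1 - α) * convexConjugate E q
        - β / 2 * α * (1 - α) * (∑ i, |p i - q i|) ^ 2 := by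
  refine csSup_le ⟨_, 0, rfl⟩ ?_
  rintro _ ⟨u, rfl⟩
  set T := ∑ i, |p i - q i|
  obtain ⟨z, hz, hpqz⟩ := exists_norm_le_dotProduct_eq (by positivity : 0 ≤ β * T) (p - q)
  have hsmooth := smul_add_le_of_convexOn_sq_sub (hE u z) hα0 hα1
  simp only [zero_smul, add_zero] at hsmooth
  have hzβ : ‖z‖ ^ 2 / β / 2 * (α * (1 - α)) ≤ β * T ^ 2 / 2 * (α * (1 - α)) := by
    have : 0 ≤ α * (1 - α) := mul_nonneg hα0 (sub_nonneg.2 hα1)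
    gcongr
    calc ‖z‖ ^ 2 / β ≤ (β * T) ^ 2 / β := by gcongr
      _ = β * T ^ 2 := by field_simp
  have hp' := mul_le_mul_of_nonneg_left (le_csSup hp ⟨u + (1 - α) • z, rfl⟩) hα0
  have hq' := mul_le_mul_of_nonneg_left (le_csSup hq ⟨u + (-α) • z, rfl⟩) (sub_nonneg.2 hα1)
  simp only [sub_dotProduct, dotProduct_add, dotProduct_smul, add_dotProduct, smul_dotProduct,
    smul_eq_mul] at hp' hq' hpqz ⊢
  unfold convexConjugate
  linear_combination hp' + hq' + hsmooth + hzβ - α * (1 - α) * hpqz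

end ConvexConjugate

section GibbsMean

variable {K : Type*} {s : Finset K}

noncomputable def gibbsMean (s : Finset K) (h g : K → ℝ) : ℝ :=
  (∑ k ∈ s, exp (h k) * g k) / ∑ k ∈ s, exp (h k)

variable {h f g : K → ℝ}

lemma sum_exp_pos (hs : s.Nonempty) : 0 < ∑ k ∈ s, exp (h k) :=
  sum_pos (fun _ _ => exp_pos _) hs

lemma le_log_sum_exp {x : K → ℝ} {k : K} (hk : k ∈ s) :
    x k ≤ log (∑ j ∈ s, exp (x j)) :=
  (le_log_iff_exp_le (sum_exp_pos ⟨k, hk⟩)).2 (single_le_sum (fun j _ => (exp_pos (x j)).le) hk)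

lemma gibbsMean_const_mul (d : ℝ) :
    gibbsMean s h (fun k => d * g k) = d * gibbsMean s h g := by
  simp only [gibbsMean, mul_left_comm _ d, ← mul_sum, mul_div_assoc]

lemma gibbsMean_const (hs : s.Nonempty) (c : ℝ) : gibbsMean s h (fun _ => c) = c := by
  rw [gibbsMean, ← sum_mul, mul_div_cancel_left₀ _ (sum_exp_pos hs).ne']

lemma gibbsMean_const_add (hs : s.Nonempty) (c : ℝ) :
    gibbsMean s h (fun k => c + g k) = c + gibbsMean s h g := by
  simp only [gibbsMean, mul_add, sum_add_distrib, add_div]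
  congr 1
  exact gibbsMean_const hs c

lemma gibbsMean_mono (hfg : ∀ k ∈ s, f k ≤ g k) : gibbsMean s h f ≤ gibbsMean s h g :=
  div_le_div_of_nonneg_right
    (sum_le_sum fun k hk => mul_le_mul_of_nonneg_left (hfg k hk) (exp_pos _).le)
    (sum_nonneg fun _ _ => (exp_pos _).le)

lemma sq_gibbsMean_le : gibbsMean s h g ^ 2 ≤ gibbsMean s h (fun k => g k ^ 2) := by
  have hZ : 0 ≤ ∑ k ∈ s, exp (h k) := sum_nonneg fun _ _ => (exp_pos _).le
  have := sq_sum_div_le_sum_sq_div s (fun k => exp (h k) * g k) (fun k _ => exp_pos (h k))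
  rw [gibbsMean, gibbsMean, div_pow, sq (∑ k ∈ s, exp (h k)), ← div_div]
  refine div_le_div_of_nonneg_right (this.trans_eq (sum_congr rfl fun k _ => ?_)) hZ
  field_simp [(exp_pos (h k)).ne']

-- With `Y`, `V` the first two moments of inner Gibbs laws of a direction scaled by `1 / μl ℓ`,
-- the left side is the second derivative of a nested log-sum-exp along that direction.
lemma nested_gibbs_variance_le (hs : s.Nonempty) {μ m c : ℝ} {μl Y V : K → ℝ} (hm : 0 < m)
    (hmμ : m ≤ μ) (hmμl : ∀ ℓ ∈ s, m ≤ μl ℓ) (hYV : ∀ ℓ ∈ s, Y ℓ ^ 2 ≤ V ℓ)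
    (hV : ∀ ℓ ∈ s, μl ℓ ^ 2 * V ℓ ≤ c) :
    μ * (gibbsMean s h (fun ℓ => μl ℓ / μ * (V ℓ - Y ℓ ^ 2) + (μl ℓ / μ * Y ℓ) ^ 2)
      - gibbsMean s h (fun ℓ => μl ℓ / μ * Y ℓ) ^ 2) ≤ c / m := by
  have hμ : 0 < μ := hm.trans_le hmμ
  let y : K → ℝ := fun ℓ => μl ℓ * Y ℓ
  have hpt : ∀ ℓ ∈ s, μ * (μl ℓ / μ * (V ℓ - Y ℓ ^ 2) + (μl ℓ / μ * Y ℓ) ^ 2)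
      ≤ c / m + (1 / μ - 1 / m) * y ℓ ^ 2 := by
    intro ℓ hℓ
    have hμl : 0 < μl ℓ := hm.trans_le (hmμl ℓ hℓ)
    have hvar : 0 ≤ V ℓ - Y ℓ ^ 2 := sub_nonneg.2 (hYV ℓ hℓ)
    have hinner : μl ℓ * (V ℓ - Y ℓ ^ 2) ≤ (c - y ℓ ^ 2) / m := by
      rw [le_div_iff₀ hm]
      calc μl ℓ * (V ℓ - Y ℓ ^ 2) * m ≤ μl ℓ * (V ℓ - Y ℓ ^ 2) * μl ℓ := by
            gcongr
            exact hmμl ℓ hℓ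
        _ = μl ℓ ^ 2 * V ℓ - y ℓ ^ 2 := by ring
        _ ≤ c - y ℓ ^ 2 := by linarith [hV ℓ hℓ]
    calc _ = μl ℓ * (V ℓ - Y ℓ ^ 2) + y ℓ ^ 2 / μ := by field_simp; ring
      _ ≤ (c - y ℓ ^ 2) / m + y ℓ ^ 2 / μ := by gcongr
      _ = _ := by ring
  have hmean : gibbsMean s h (fun ℓ => μl ℓ / μ * Y ℓ) = gibbsMean s h y / μ := by
    rw [div_eq_inv_mul, ← gibbsMean_const_mul]
    congr 1; funext ℓ; ring
  have hA : μ * gibbsMean s h (fun ℓ => μl ℓ / μ * (V ℓ - Y ℓ ^ 2) + (μl ℓ / μ * Y ℓ) ^ 2)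
      ≤ c / m + (1 / μ - 1 / m) * gibbsMean s h (fun ℓ => y ℓ ^ 2) := by
    rw [← gibbsMean_const_mul, ← gibbsMean_const_mul, ← gibbsMean_const_add hs]
    exact gibbsMean_mono hpt
  have hJensen : gibbsMean s h y ^ 2 ≤ gibbsMean s h (fun ℓ => y ℓ ^ 2) := sq_gibbsMean_le
  have hcoef : 1 / μ - 1 / m ≤ 0 := sub_nonpos.2 (one_div_le_one_div_of_le hm hmμ)
  rw [hmean]
  calc _ = μ * gibbsMean s h (fun ℓ => μl ℓ / μ * (V ℓ - Y ℓ ^ 2) + (μl ℓ / μ * Y ℓ) ^ 2)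
        - gibbsMean s h y ^ 2 / μ := by field_simp
    _ ≤ c / m + (1 / μ - 1 / m) * gibbsMean s h y ^ 2 - gibbsMean s h y ^ 2 / μ := by
        linarith [mul_le_mul_of_nonpos_left hJensen hcoef]
    _ = c / m - gibbsMean s h y ^ 2 / m := by ring
    _ ≤ c / m := sub_le_self _ (by positivity)

variable {h h' h'' : K → ℝ → ℝ} {t : ℝ}

theorem hasDerivAt_log_sum_exp (hs : s.Nonempty) (hh : ∀ k ∈ s, HasDerivAt (h k) (h' k t) t) :
    HasDerivAt (fun t => log (∑ k ∈ s, exp (h k t))) (gibbsMean s (h · t) (h' · t)) t :=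
  (HasDerivAt.fun_sum fun k hk => (hh k hk).exp).log (sum_exp_pos hs).ne'

theorem hasDerivAt_gibbsMean (hs : s.Nonempty) (hh : ∀ k ∈ s, HasDerivAt (h k) (h' k t) t)
    (hh' : ∀ k ∈ s, HasDerivAt (h' k) (h'' k t) t) :
    HasDerivAt (fun t => gibbsMean s (h · t) (h' · t))
      (gibbsMean s (h · t) (fun k => h'' k t + h' k t ^ 2) - gibbsMean s (h · t) (h' · t) ^ 2) t := by
  have hnum := HasDerivAt.fun_sum fun k hk => (hh k hk).exp.mul (hh' k hk)
  have hden := HasDerivAt.fun_sum fun k hk => (hh k hk).exp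
  refine (hnum.div hden (sum_exp_pos hs).ne').congr_deriv ?_
  have hZ := (sum_exp_pos (h := (h · t)) hs).ne'
  have hnum' : ∑ k ∈ s, exp (h k t) * (h'' k t + h' k t ^ 2)
      = ∑ k ∈ s, (exp (h k t) * h' k t * h' k t + exp (h k t) * h'' k t) :=
    sum_congr rfl fun k _ => by ring
  unfold gibbsMean
  rw [hnum']
  simp only [Pi.mul_apply]
  field_simp

end GibbsMean

section NestedLogSumExp

variable {ι L : Type*} [Fintype L]

noncomputable def nestedLogSumExp (N : L → Finset ι) (a : ι → L → ℝ) (μl : L → ℝ) (μ : ℝ)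
    (u : ι → ℝ) : ℝ :=
  μ * log (∑ ℓ, exp (μl ℓ / μ * log (∑ i ∈ N ℓ, exp ((a i ℓ + u i) / μl ℓ))))

variable {N : L → Finset ι} {a : ι → L → ℝ} {μl : L → ℝ} {μ : ℝ}

lemma mul_log_sum_rpow_eq_nestedLogSumExp {σ : ι → L → ℝ} (hσ : ∀ ℓ, ∀ i ∈ N ℓ, 0 < σ i ℓ)
    (hN : ∀ ℓ, (N ℓ).Nonempty) (u : ι → ℝ) :
    μ * log (∑ ℓ, (∑ i ∈ N ℓ, (σ i ℓ * exp (u i)) ^ (1 / μl ℓ)) ^ (μl ℓ / μ))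
      = nestedLogSumExp N (fun i ℓ => log (σ i ℓ)) μl μ u := by
  unfold nestedLogSumExp
  congr 2
  refine sum_congr rfl fun ℓ _ => ?_
  have hinner : ∑ i ∈ N ℓ, (σ i ℓ * exp (u i)) ^ (1 / μl ℓ)
      = ∑ i ∈ N ℓ, exp ((log (σ i ℓ) + u i) / μl ℓ) :=
    sum_congr rfl fun i hi => by
      rw [rpow_def_of_pos (mul_pos (hσ ℓ i hi) (exp_pos _)),
        log_mul (hσ ℓ i hi).ne' (exp_pos _).ne', log_exp, mul_one_div]
  rw [hinner, rpow_def_of_pos (sum_exp_pos (hN ℓ)), mul_comm]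

lemma le_nestedLogSumExp (hμ : 0 < μ) {ℓ : L} (hμl : 0 < μl ℓ) {i : ι} (hi : i ∈ N ℓ)
    (u : ι → ℝ) : u i + a i ℓ ≤ nestedLogSumExp N a μl μ u :=
  calc u i + a i ℓ = μ * (μl ℓ / μ * ((a i ℓ + u i) / μl ℓ)) := by field_simp; ring
    _ ≤ μ * (μl ℓ / μ * log (∑ j ∈ N ℓ, exp ((a j ℓ + u j) / μl ℓ))) := by
        gcongr
        exact le_log_sum_exp (x := fun j => (a j ℓ + u j) / μl ℓ) hi
    _ ≤ nestedLogSumExp N a μl μ u := mul_le_mul_of_nonneg_left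
        (le_log_sum_exp (x := fun ℓ => μl ℓ / μ * log (∑ j ∈ N ℓ, exp ((a j ℓ + u j) / μl ℓ)))
          (mem_univ ℓ)) hμ.le

lemma exists_add_le_nestedLogSumExp (hμ : 0 < μ) (hμl : ∀ ℓ, 0 < μl ℓ)
    (hcover : ∀ i, ∃ ℓ, i ∈ N ℓ) : ∃ c : ι → ℝ, ∀ u i, u i + c i ≤ nestedLogSumExp N a μl μ u := by
  choose ℓ hℓ using hcover
  exact ⟨fun i => a i (ℓ i), fun u i => le_nestedLogSumExp hμ (hμl (ℓ i)) (hℓ i) u⟩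

theorem convexOn_sq_sub_nestedLogSumExp_add_smul [Fintype ι] [Nonempty L] {m : ℝ} (hm : 0 < m)
    (hmμ : m ≤ μ) (hmμl : ∀ ℓ, m ≤ μl ℓ) (hN : ∀ ℓ, (N ℓ).Nonempty) (u z : ι → ℝ) :
    ConvexOn ℝ univ (fun t => ‖z‖ ^ 2 / m / 2 * t ^ 2 - nestedLogSumExp N a μl μ (u + t • z)) := by
  have hμl : ∀ ℓ, 0 < μl ℓ := fun ℓ => hm.trans_le (hmμl ℓ)
  let b : ι → L → ℝ := fun i ℓ => z i / μl ℓ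
  let e : L → ι → ℝ → ℝ := fun ℓ i t => (a i ℓ + u i) / μl ℓ + t * b i ℓ
  let Y : L → ℝ → ℝ := fun ℓ t => gibbsMean (N ℓ) (e ℓ · t) (b · ℓ)
  let V : L → ℝ → ℝ := fun ℓ t => gibbsMean (N ℓ) (e ℓ · t) (fun i => 0 + b i ℓ ^ 2)
  let H : L → ℝ → ℝ := fun ℓ t => μl ℓ / μ * log (∑ i ∈ N ℓ, exp (e ℓ i t))
  let H' : L → ℝ → ℝ := fun ℓ t => μl ℓ / μ * Y ℓ t
  let H'' : L → ℝ → ℝ := fun ℓ t => μl ℓ / μ * (V ℓ t - Y ℓ t ^ 2)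
  have he : ∀ ℓ i t, HasDerivAt (e ℓ i) (b i ℓ) t := fun ℓ i t =>
    (hasDerivAt_mul_const (b i ℓ)).const_add _
  have hH : ∀ ℓ t, HasDerivAt (H ℓ) (H' ℓ t) t := fun ℓ t =>
    (hasDerivAt_log_sum_exp (h := e ℓ) (h' := fun i _ => b i ℓ) (hN ℓ)
      fun i _ => he ℓ i t).const_mul _
  have hH' : ∀ ℓ t, HasDerivAt (H' ℓ) (H'' ℓ t) t := fun ℓ t =>
    (hasDerivAt_gibbsMean (h := e ℓ) (h' := fun i _ => b i ℓ) (h'' := fun _ _ => 0) (hN ℓ)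
      (fun i _ => he ℓ i t) fun i _ => hasDerivAt_const t (b i ℓ)).const_mul _
  have hline : ∀ t, nestedLogSumExp N a μl μ (u + t • z) = μ * log (∑ ℓ, exp (H ℓ t)) := by
    intro t
    simp only [nestedLogSumExp, H, e, b, Pi.add_apply, Pi.smul_apply, smul_eq_mul]
    congr! 8 with ℓ - i
    ring
  simp_rw [hline]
  refine convexOn_univ_sq_sub_of_deriv2_le
    (fun t => (hasDerivAt_log_sum_exp (h := H) (h' := H') univ_nonempty
      fun ℓ _ => hH ℓ t).const_mul μ)
    (fun t => (hasDerivAt_gibbsMean (h := H) (h' := H') (h'' := H'') univ_nonempty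
      (fun ℓ _ => hH ℓ t) fun ℓ _ => hH' ℓ t).const_mul μ)
    fun t => nested_gibbs_variance_le (Y := (Y · t)) (V := (V · t)) univ_nonempty hm hmμ
      (fun ℓ _ => hmμl ℓ) (fun ℓ _ => ?_) (fun ℓ _ => ?_)
  · simp only [Y, V, zero_add]
    exact sq_gibbsMean_le
  · rw [← gibbsMean_const_mul]
    refine (gibbsMean_mono fun i _ => ?_).trans_eq (gibbsMean_const (hN ℓ) _)
    have hzi : z i ^ 2 ≤ ‖z‖ ^ 2 := by
      simpa only [Real.norm_eq_abs, sq_abs] using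
        pow_le_pow_left₀ (norm_nonneg _) (norm_le_pi_norm z i) 2
    calc μl ℓ ^ 2 * (0 + b i ℓ ^ 2) = z i ^ 2 := by
          simp only [b, zero_add]
          field_simp [(hμl ℓ).ne']
      _ ≤ ‖z‖ ^ 2 := hzi

theorem convexConjugate_nestedLogSumExp_add_const_smul_add_le [Fintype ι] [Nonempty L] {m : ℝ}
    (hm : 0 < m) (hmμ : m ≤ μ) (hmμl : ∀ ℓ, m ≤ μl ℓ) (hN : ∀ ℓ, (N ℓ).Nonempty)
    (hcover : ∀ i, ∃ ℓ, i ∈ N ℓ) (c : ℝ) {p q : ι → ℝ} (hp0 : ∀ i, 0 ≤ p i)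
    (hp1 : ∑ i, p i = 1) (hq0 : ∀ i, 0 ≤ q i) (hq1 : ∑ i, q i = 1) {α : ℝ} (hα0 : 0 ≤ α)
    (hα1 : α ≤ 1) :
    convexConjugate (fun u => nestedLogSumExp N a μl μ u + c) (α • p + (1 - α) • q)
      ≤ α * convexConjugate (fun u => nestedLogSumExp N a μl μ u + c) p
        + (1 - α) * convexConjugate (fun u => nestedLogSumExp N a μl μ u + c) q
        - m / 2 * α * (1 - α) * (∑ i, |p i - q i|) ^ 2 := by
  obtain ⟨b, hb⟩ := exists_add_le_nestedLogSumExp (a := a) (hm.trans_le hmμ)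
    (fun ℓ => hm.trans_le (hmμl ℓ)) hcover
  have hbdd {r : ι → ℝ} (hr0 : ∀ i, 0 ≤ r i) (hr1 : ∑ i, r i = 1) :=
    bddAbove_convexConjugate_set (E := fun u => nestedLogSumExp N a μl μ u + c)
      (c := fun i => b i + c) (fun u i => by linarith [hb u i]) hr0 hr1
  refine convexConjugate_smul_add_le hm (fun u z => ?_) (hbdd hp0 hp1) (hbdd hq0 hq1) hα0 hα1
  refine ((convexOn_sq_sub_nestedLogSumExp_add_smul (a := a) hm hmμ hmμl hN u z).add_const
    (-c)).congr fun t _ => ?_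
  simp only [Pi.add_apply]
  ring

end NestedLogSumExp

lemma one_div_two_div_sub_one_div_le {m μ : ℝ} (hm : 0 < m) (hmμ : m ≤ μ) :
    1 / (2 / m - 1 / μ) ≤ m := by
  have hD : 0 < 2 / m - 1 / μ := by
    rw [show 2 / m = 1 / m + 1 / m by ring]
    linarith [one_div_pos.2 hm, one_div_le_one_div_of_le hm hmμ]
  have hmD : m * (2 / m - 1 / μ) = 2 - m / μ := by field_simp
  rw [div_le_iff₀ hD, hmD]
  linarith [(div_le_one (hm.trans_le hmμ)).2 hmμ]

theorem conjugate_strongly_convex_GNL_general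
    (n : ℕ)
    (L : Type) [Fintype L] [Nonempty L]
    (μ : ℝ)
    (μl : L → ℝ) (hμl : ∀ ℓ, 0 < μl ℓ) (hμlμ : ∀ ℓ, μl ℓ ≤ μ)
    (σ : Fin n → L → ℝ)
    (hσ1 : ∀ i, ∑ ℓ, σ i ℓ = 1)
    (hnest : ∀ ℓ : L, ∃ i, 0 < σ i ℓ)
    (G : (Fin n → ℝ) → ℝ)
    (hG : ∀ x : Fin n → ℝ, (∀ i, 0 < x i) →
      G x = ∑ ℓ, (∑ i ∈ Finset.univ.filter (fun i => 0 < σ i ℓ),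
        (σ i ℓ * x i) ^ (1 / μl ℓ)) ^ (μl ℓ / μ))
    (E : (Fin n → ℝ) → ℝ)
    (hE : ∀ u : Fin n → ℝ,
      E u = μ * Real.log (G (fun i => Real.exp (u i))) + μ * Real.eulerMascheroniConstant)
    (Estar : (Fin n → ℝ) → ℝ)
    (hEstar : ∀ p : Fin n → ℝ,
      Estar p = sSup {y : ℝ | ∃ u : Fin n → ℝ, y = ∑ i, p i * u i - E u}) :
    ∀ p ∈ {p : Fin n → ℝ | ∑ i, p i = 1 ∧ ∀ i, 0 ≤ p i},
    ∀ q ∈ {p : Fin n → ℝ | ∑ i, p i = 1 ∧ ∀ i, 0 ≤ p i},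
    ∀ α ∈ Set.Icc (0 : ℝ) 1,
      Estar (α • p + (1 - α) • q)
        ≤ α * Estar p + (1 - α) * Estar q
          - (1 / (2 / (⨅ ℓ, μl ℓ) - 1 / μ)) / 2
            * α * (1 - α) * (∑ i, |p i - q i|) ^ 2 := by
  rintro p ⟨hp1, hp0⟩ q ⟨hq1, hq0⟩ α ⟨hα0, hα1⟩
  set N : L → Finset (Fin n) := fun ℓ => univ.filter (fun i => 0 < σ i ℓ)
  have hN : ∀ ℓ, (N ℓ).Nonempty := fun ℓ =>
    (hnest ℓ).imp fun i hi => mem_filter.2 ⟨mem_univ i, hi⟩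
  have hcover : ∀ i, ∃ ℓ, i ∈ N ℓ := fun i => by
    simpa [N] using exists_lt_of_sum_lt (s := univ) (f := fun _ => (0 : ℝ)) (g := σ i)
      (by simp [hσ1 i])
  obtain rfl : E = fun u => nestedLogSumExp N (fun i ℓ => log (σ i ℓ)) μl μ u
      + μ * eulerMascheroniConstant := funext fun u => by
    rw [hE, hG _ fun i => exp_pos _,
      mul_log_sum_rpow_eq_nestedLogSumExp (fun ℓ i hi => (mem_filter.1 hi).2) hN]
  obtain ⟨ℓ₀, hℓ₀⟩ := exists_eq_ciInf_of_finite (f := μl)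
  set m := ⨅ ℓ, μl ℓ
  have hmμl : ∀ ℓ, m ≤ μl ℓ := ciInf_le (Finite.bddBelow_range μl)
  have hm : 0 < m := hℓ₀ ▸ hμl ℓ₀
  have hmμ : m ≤ μ := hℓ₀ ▸ hμlμ ℓ₀
  rw [show Estar = convexConjugate _ from funext hEstar]
  refine (convexConjugate_nestedLogSumExp_add_const_smul_add_le hm hmμ hmμl hN hcover _
    hp0 hp1 hq0 hq1 hα0 hα1).trans ?_
  have := sub_nonneg.2 hα1
  gcongr
  exact one_div_two_div_sub_one_div_le hm hmμ

/-- Strong convexity of `E*` for generalized nested logit models: for the GNL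
generating function `G`, the convex conjugate of `E(u) = μ ln G(e^u) + μγ` is `β`-strongly
convex on the simplex `Δ` w.r.t. the `ℓ1`-norm with `β = 1/(2/(min_ℓ μ_ℓ) − 1/μ)`. -/
theorem conjugate_strongly_convex_GNL
    (n : ℕ) (hn : 2 ≤ n)
    (L : Type) [Fintype L] [Nonempty L]
    (μ : ℝ) (hμ : 0 < μ)
    (μl : L → ℝ) (hμl : ∀ ℓ, 0 < μl ℓ) (hμlμ : ∀ ℓ, μl ℓ ≤ μ)
    (σ : Fin n → L → ℝ) (hσ0 : ∀ i ℓ, 0 ≤ σ i ℓ)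
    (hσ1 : ∀ i, ∑ ℓ, σ i ℓ = 1)
    (hnest : ∀ ℓ : L, ∃ i, 0 < σ i ℓ)
    (G : (Fin n → ℝ) → ℝ)
    (hG : ∀ x : Fin n → ℝ, (∀ i, 0 < x i) →
      G x = ∑ ℓ, (∑ i ∈ Finset.univ.filter (fun i => 0 < σ i ℓ),
        (σ i ℓ * x i) ^ (1 / μl ℓ)) ^ (μl ℓ / μ))
    (E : (Fin n → ℝ) → ℝ)
    (hE : ∀ u : Fin n → ℝ,
      E u = μ * Real.log (G (fun i => Real.exp (u i))) + μ * Real.eulerMascheroniConstant)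
    (Estar : (Fin n → ℝ) → ℝ)
    (hEstar : ∀ p : Fin n → ℝ,
      Estar p = sSup {y : ℝ | ∃ u : Fin n → ℝ, y = ∑ i, p i * u i - E u}) :
    ∀ p ∈ {p : Fin n → ℝ | ∑ i, p i = 1 ∧ ∀ i, 0 ≤ p i},
    ∀ q ∈ {p : Fin n → ℝ | ∑ i, p i = 1 ∧ ∀ i, 0 ≤ p i},
    ∀ α ∈ Set.Icc (0 : ℝ) 1,
      Estar (α • p + (1 - α) • q)
        ≤ α * Estar p + (1 - α) * Estar q
          - (1 / (2 / (⨅ ℓ, μl ℓ) - 1 / μ)) / 2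
            * α * (1 - α) * (∑ i, |p i - q i|) ^ 2 :=
  conjugate_strongly_convex_GNL_general n L μ μl hμl hμlμ σ hσ1 hnest G hG E hE Estar hEstar
end

section
/- Lower bound and prox-center for E*: assume the convex conjugate E* is β-strongly convex on Δ with respect to the ℓ1-norm for some β > 0. Then the vector p₀ ∈ Δ defined by p₀⁽ⁱ⁾ = μ({x ∈ ℝⁿ : x⁽ⁱ⁾ ≥ x⁽ʲ⁾ for all j = 1,…,n}) is the unique minimizer of E* over Δ, its value is E*(p₀) = − 𝔼[max_{1≤i≤n} ε⁽ⁱ⁾], and consequently E*(p) ≥ − 𝔼[max_{1≤i≤n} ε⁽ⁱ⁾] for all p ∈ Δ. -/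
/-!
For `p ∈ Δ` we have `∑ pᵢ (uᵢ + εᵢ) ≤ maxᵢ (uᵢ + εᵢ)`, so the supremum defining `E*(p)` is
bounded, and its term at `u = 0` gives `E*(p) ≥ -E(0) = -𝔼[maxᵢ εᵢ]`. Conversely, split `ℝⁿ` into
the cells where coordinate `i` is maximal; their overlaps lie in hyperplanes `xᵢ = xⱼ`, which are
`μ`-null by absolute continuity. On cell `i` the maximum of `x` is `xᵢ`, so
`⟨p₀, u⟩ + 𝔼[maxᵢ εᵢ] = ∑ᵢ 𝔼[(uᵢ + εᵢ); cell i] ≤ E(u)`, whence `E*(p₀) ≤ -𝔼[maxᵢ εᵢ]`.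
Strong convexity makes `E*` strictly convex on `Δ`, so this minimizer is unique.
-/

open MeasureTheory Set

section MaxCell

variable {ι : Type*} [Fintype ι] {μ : Measure (ι → ℝ)}

def maxCell (i : ι) : Set (ι → ℝ) := {x | ∀ j, x j ≤ x i}

lemma measurableSet_maxCell (i : ι) : MeasurableSet (maxCell i) := by
  simp only [maxCell, ofPred_forall]
  exact .iInter fun j => measurableSet_le (measurable_pi_apply j) (measurable_pi_apply i)

lemma iUnion_maxCell [Nonempty ι] : ⋃ i, maxCell (ι := ι) i = univ :=
  eq_univ_of_forall fun x => mem_iUnion.2 (Finite.exists_max x)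

lemma volume_setOf_apply_eq_apply_eq_zero {i j : ι} (hij : i ≠ j) :
    volume {x : ι → ℝ | x i = x j} = 0 := by
  classical
  let L : (ι → ℝ) →ₗ[ℝ] ℝ := (LinearMap.proj i : (ι → ℝ) →ₗ[ℝ] ℝ) - LinearMap.proj j
  have hker : {x : ι → ℝ | x i = x j} = LinearMap.ker L := by
    ext x
    simp [L, sub_eq_zero]
  rw [hker]
  refine Measure.addHaar_submodule _ _ fun htop => ?_
  have hsingle : Pi.single i (1 : ℝ) ∈ LinearMap.ker L := by rw [htop]; trivial
  simp [L, Pi.single_eq_of_ne hij.symm] at hsingle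

lemma pairwise_aedisjoint_maxCell (hac : μ ≪ volume) :
    Pairwise (Function.onFun (AEDisjoint μ) maxCell) :=
  fun i j hij => measure_mono_null (fun _ hx => le_antisymm (hx.2 i) (hx.1 j))
    (hac (volume_setOf_apply_eq_apply_eq_zero hij))

lemma integral_eq_sum_setIntegral_maxCell [Nonempty ι] (hac : μ ≪ volume)
    {f : (ι → ℝ) → ℝ} (hf : Integrable f μ) : ∫ x, f x ∂μ = ∑ i, ∫ x in maxCell i, f x ∂μ := by
  have h := integral_iUnion_ae (fun i => (measurableSet_maxCell i).nullMeasurableSet)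
    (pairwise_aedisjoint_maxCell hac) (by rw [iUnion_maxCell]; exact hf.integrableOn)
  rwa [iUnion_maxCell, Measure.restrict_univ, tsum_fintype] at h

variable (μ) in
def choiceProb (i : ι) : ℝ := μ.real (maxCell i)

lemma choiceProb_mem_stdSimplex [Nonempty ι] [IsProbabilityMeasure μ] (hac : μ ≪ volume) :
    choiceProb μ ∈ stdSimplex ℝ ι := by
  refine ⟨fun i => measureReal_nonneg, ?_⟩
  simpa [choiceProb, setIntegral_const] using (integral_eq_sum_setIntegral_maxCell hac
    (integrable_const (1 : ℝ))).symm

end MaxCell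

section Surplus

variable {ι : Type*} {μ : Measure (ι → ℝ)}

variable (μ) in
noncomputable def surplus (u : ι → ℝ) : ℝ := ∫ x, ⨆ i, (u i + x i) ∂μ

lemma surplus_zero : surplus μ 0 = ∫ x, ⨆ i, x i ∂μ := by
  simp [surplus]

variable [Fintype ι] [Nonempty ι]

lemma abs_ciSup_le_sum_abs (a : ι → ℝ) : |⨆ i, a i| ≤ ∑ i, |a i| := by
  have hle : ∀ i, |a i| ≤ ∑ j, |a j| := fun i =>
    Finset.single_le_sum (f := fun j => |a j|) (fun j _ => abs_nonneg _) (Finset.mem_univ i)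
  obtain ⟨i⟩ := ‹Nonempty ι›
  refine abs_le.2 ⟨?_, ciSup_le fun j => (le_abs_self _).trans (hle j)⟩
  calc -∑ j, |a j| ≤ -|a i| := neg_le_neg (hle i)
    _ ≤ a i := neg_abs_le _
    _ ≤ ⨆ j, a j := le_ciSup (Finite.bddAbove_range a) i

lemma integrable_iSup_add [IsFiniteMeasure μ] (hint : ∀ i, Integrable (fun x : ι → ℝ => x i) μ)
    (u : ι → ℝ) :
    Integrable (fun x : ι → ℝ => ⨆ i, (u i + x i)) μ := by
  have hbound : Integrable (fun x : ι → ℝ => ∑ i, |u i + x i|) μ :=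
    integrable_finsetSum _ fun i _ => ((integrable_const (u i)).add (hint i)).abs
  refine hbound.mono'
    (Measurable.iSup fun i => measurable_const.add (measurable_pi_apply i)).aestronglyMeasurable
    (.of_forall fun x => ?_)
  simpa only [Real.norm_eq_abs] using abs_ciSup_le_sum_abs fun i => u i + x i

lemma sum_mul_add_sum_mul_integral_le_surplus [IsProbabilityMeasure μ]
    (hint : ∀ i, Integrable (fun x : ι → ℝ => x i) μ) {p : ι → ℝ} (hp : p ∈ stdSimplex ℝ ι)
    (u : ι → ℝ) : ∑ i, p i * u i + ∑ i, p i * ∫ x, x i ∂μ ≤ surplus μ u := by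
  have hint_mul : ∀ i, Integrable (fun x : ι → ℝ => p i * (u i + x i)) μ :=
    fun i => ((integrable_const (u i)).add (hint i)).const_mul _
  have hconvex : ∀ x : ι → ℝ, ∑ i, p i * (u i + x i) ≤ ⨆ j, (u j + x j) := fun x =>
    calc ∑ i, p i * (u i + x i) ≤ ∑ i, p i * ⨆ j, (u j + x j) :=
          Finset.sum_le_sum fun i _ => mul_le_mul_of_nonneg_left
            (le_ciSup (Finite.bddAbove_range fun j => u j + x j) i) (hp.1 i)
      _ = ⨆ j, (u j + x j) := by rw [← Finset.sum_mul, hp.2, one_mul]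
  calc ∑ i, p i * u i + ∑ i, p i * ∫ x, x i ∂μ
      = ∫ x, ∑ i, p i * (u i + x i) ∂μ := by
        rw [integral_finsetSum _ fun i _ => hint_mul i, ← Finset.sum_add_distrib]
        refine Finset.sum_congr rfl fun i _ => ?_
        rw [integral_const_mul, integral_add (integrable_const _) (hint i), integral_const,
          probReal_univ, one_smul, mul_add]
    _ ≤ surplus μ u :=
        integral_mono (integrable_finsetSum _ fun i _ => hint_mul i)
          (integrable_iSup_add hint u) hconvex

lemma sum_choiceProb_mul_add_integral_iSup_le_surplus [IsFiniteMeasure μ]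
    (hint : ∀ i, Integrable (fun x : ι → ℝ => x i) μ) (hac : μ ≪ volume) (u : ι → ℝ) :
    ∑ i, choiceProb μ i * u i + ∫ x, ⨆ i, x i ∂μ ≤ surplus μ u := by
  have hmax : ∀ i, ∫ x in maxCell i, ⨆ j, x j ∂μ = ∫ x in maxCell i, x i ∂μ := fun i =>
    setIntegral_congr_fun (measurableSet_maxCell i) fun x hx =>
      le_antisymm (ciSup_le hx) (le_ciSup (Finite.bddAbove_range _) i)
  have hcell : ∀ i, choiceProb μ i * u i + ∫ x in maxCell i, x i ∂μ
      = ∫ x in maxCell i, (u i + x i) ∂μ := fun i => by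
    rw [integral_add (integrable_const _) (hint i).integrableOn,
      setIntegral_const, smul_eq_mul, choiceProb]
  calc ∑ i, choiceProb μ i * u i + ∫ x, ⨆ i, x i ∂μ
      = ∑ i, ∫ x in maxCell i, (u i + x i) ∂μ := by
        rw [← surplus_zero, surplus, integral_eq_sum_setIntegral_maxCell hac
          (by simpa using integrable_iSup_add hint 0)]
        simp only [Pi.zero_apply, zero_add, hmax, ← hcell, Finset.sum_add_distrib]
    _ ≤ ∑ i, ∫ x in maxCell i, ⨆ j, (u j + x j) ∂μ :=
        Finset.sum_le_sum fun i _ => setIntegral_mono_on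
          ((integrable_const (u i)).add (hint i)).integrableOn
          (integrable_iSup_add hint u).integrableOn (measurableSet_maxCell i)
          fun x _ => le_ciSup (Finite.bddAbove_range fun j => u j + x j) i
    _ = surplus μ u := (integral_eq_sum_setIntegral_maxCell hac (integrable_iSup_add hint u)).symm

end Surplus

section Conjugate

variable {ι : Type*} [Fintype ι]

/-- Where the set is not bounded above, `sSup` returns the junk value `0`. -/
noncomputable def conjugate (f : (ι → ℝ) → ℝ) (p : ι → ℝ) : ℝ :=
  sSup {y : ℝ | ∃ u : ι → ℝ, y = ∑ i, p i * u i - f u}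

lemma conjugate_le {f : (ι → ℝ) → ℝ} {p : ι → ℝ} {c : ℝ} (h : ∀ u, ∑ i, p i * u i - f u ≤ c) :
    conjugate f p ≤ c :=
  csSup_le ⟨_, 0, rfl⟩ fun _ ⟨u, hy⟩ => hy ▸ h u

lemma le_conjugate {f : (ι → ℝ) → ℝ} {p : ι → ℝ} {c : ℝ} (h : ∀ u, ∑ i, p i * u i - f u ≤ c)
    (u : ι → ℝ) : ∑ i, p i * u i - f u ≤ conjugate f p :=
  le_csSup ⟨c, fun _ ⟨v, hy⟩ => hy ▸ h v⟩ ⟨u, rfl⟩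

variable [Nonempty ι] {μ : Measure (ι → ℝ)} [IsProbabilityMeasure μ]

lemma neg_integral_iSup_le_conjugate_surplus
    (hint : ∀ i, Integrable (fun x : ι → ℝ => x i) μ) {p : ι → ℝ} (hp : p ∈ stdSimplex ℝ ι) :
    -∫ x, ⨆ i, x i ∂μ ≤ conjugate (surplus μ) p := by
  have h := le_conjugate (f := surplus μ) (p := p) (c := -∑ i, p i * ∫ x, x i ∂μ)
    (fun u => by linarith [sum_mul_add_sum_mul_integral_le_surplus hint hp u]) 0
  simpa [surplus_zero] using h

lemma conjugate_surplus_choiceProb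
    (hint : ∀ i, Integrable (fun x : ι → ℝ => x i) μ) (hac : μ ≪ volume) :
    conjugate (surplus μ) (choiceProb μ) = -∫ x, ⨆ i, x i ∂μ :=
  le_antisymm
    (conjugate_le fun u => by linarith [sum_choiceProb_mul_add_integral_iSup_le_surplus hint hac u])
    (neg_integral_iSup_le_conjugate_surplus hint (choiceProb_mem_stdSimplex hac))

lemma isMinOn_conjugate_surplus_choiceProb
    (hint : ∀ i, Integrable (fun x : ι → ℝ => x i) μ) (hac : μ ≪ volume) :
    IsMinOn (conjugate (surplus μ)) (stdSimplex ℝ ι) (choiceProb μ) := fun _ hp => by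
  rw [mem_ofPred_eq, conjugate_surplus_choiceProb hint hac]
  exact neg_integral_iSup_le_conjugate_surplus hint hp

end Conjugate

lemma strictConvexOn_of_sum_abs_sub_sq {ι : Type*} [Fintype ι] {s : Set (ι → ℝ)}
    (hs : Convex ℝ s) {f : (ι → ℝ) → ℝ} {β : ℝ} (hβ : 0 < β)
    (hf : ∀ p ∈ s, ∀ q ∈ s, ∀ α ∈ Icc (0 : ℝ) 1, f (α • p + (1 - α) • q)
      ≤ α * f p + (1 - α) * f q - β / 2 * α * (1 - α) * (∑ i, |p i - q i|) ^ 2) :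
    StrictConvexOn ℝ s f := by
  refine ⟨hs, fun p hp q hq hpq a b ha hb hab => ?_⟩
  obtain rfl : b = 1 - a := by linarith
  have hdist : 0 < ∑ i, |p i - q i| := by
    obtain ⟨i, hi⟩ := Function.ne_iff.1 hpq
    exact (abs_pos.2 (sub_ne_zero.2 hi)).trans_le
      (Finset.single_le_sum (fun j _ => abs_nonneg (p j - q j)) (Finset.mem_univ i))
  have hgap := mul_pos (mul_pos (mul_pos (half_pos hβ) ha) hb) (pow_pos hdist 2)
  have hsc := hf p hp q hq a ⟨ha.le, by linarith⟩
  simp only [smul_eq_mul]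
  linarith

lemma StrictConvexOn.lt_of_isMinOn {E : Type*} [AddCommMonoid E] [Module ℝ E] {s : Set E}
    {f : E → ℝ} {x y : E} (hf : StrictConvexOn ℝ s f) (hx : IsMinOn f s x) (hxs : x ∈ s)
    (hys : y ∈ s) (hne : y ≠ x) : f x < f y :=
  (hx hys).lt_of_ne fun h => hne (hf.eq_of_isMinOn (fun _ hz => h ▸ hx hz) hx hys hxs)

theorem prox_center_lower_bound_general
    (n : ℕ) (hn : 2 ≤ n)
    (μ : Measure (Fin n → ℝ)) [IsProbabilityMeasure μ]
    (hint : ∀ i : Fin n, Integrable (fun x : Fin n → ℝ => x i) μ)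
    (hac : μ ≪ (volume : Measure (Fin n → ℝ)))
    (E : (Fin n → ℝ) → ℝ)
    (hE : ∀ u : Fin n → ℝ, E u = ∫ x, (⨆ i : Fin n, (u i + x i)) ∂μ)
    (Estar : (Fin n → ℝ) → ℝ)
    (hEstar : ∀ p : Fin n → ℝ,
      Estar p = sSup {y : ℝ | ∃ u : Fin n → ℝ, y = ∑ i, p i * u i - E u})
    (β : ℝ) (hβ : 0 < β)
    (hsc : ∀ p ∈ {p : Fin n → ℝ | ∑ i, p i = 1 ∧ ∀ i, 0 ≤ p i},
      ∀ q ∈ {p : Fin n → ℝ | ∑ i, p i = 1 ∧ ∀ i, 0 ≤ p i},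
      ∀ α ∈ Set.Icc (0 : ℝ) 1,
        Estar (α • p + (1 - α) • q)
          ≤ α * Estar p + (1 - α) * Estar q
            - β / 2 * α * (1 - α) * (∑ i, |p i - q i|) ^ 2)
    (p0 : Fin n → ℝ)
    (hp0 : ∀ i, p0 i = (μ {x : Fin n → ℝ | ∀ j, x j ≤ x i}).toReal) :
    p0 ∈ {p : Fin n → ℝ | ∑ i, p i = 1 ∧ ∀ i, 0 ≤ p i} ∧
    (∀ p ∈ {p : Fin n → ℝ | ∑ i, p i = 1 ∧ ∀ i, 0 ≤ p i}, Estar p0 ≤ Estar p) ∧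
    (∀ p ∈ {p : Fin n → ℝ | ∑ i, p i = 1 ∧ ∀ i, 0 ≤ p i}, p ≠ p0 →
      Estar p0 < Estar p) ∧
    Estar p0 = -∫ x, (⨆ i : Fin n, x i) ∂μ ∧
    (∀ p ∈ {p : Fin n → ℝ | ∑ i, p i = 1 ∧ ∀ i, 0 ≤ p i},
      -∫ x, (⨆ i : Fin n, x i) ∂μ ≤ Estar p) := by
  have : Nonempty (Fin n) := ⟨⟨0, by omega⟩⟩
  have hΔ : {p : Fin n → ℝ | ∑ i, p i = 1 ∧ ∀ i, 0 ≤ p i} = stdSimplex ℝ (Fin n) := by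
    ext p
    exact and_comm
  obtain rfl : E = surplus μ := funext hE
  obtain rfl : Estar = conjugate (surplus μ) := funext hEstar
  obtain rfl : p0 = choiceProb μ := funext hp0
  rw [hΔ] at hsc ⊢
  have hp0Δ := choiceProb_mem_stdSimplex hac
  have hmin := isMinOn_conjugate_surplus_choiceProb hint hac
  have hstrict := strictConvexOn_of_sum_abs_sub_sq (convex_stdSimplex ℝ (Fin n)) hβ hsc
  exact ⟨hp0Δ, fun p hp => hmin hp, fun p hp hne => hstrict.lt_of_isMinOn hmin hp0Δ hp hne,
    conjugate_surplus_choiceProb hint hac,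
    fun p hp => neg_integral_iSup_le_conjugate_surplus hint hp⟩

/-- Lower bound and prox-center for `E*`: if `E*` is `β`-strongly convex on
`Δ` w.r.t. the `ℓ1`-norm, then the vector `p₀` of zero-utility choice probabilities lies in
`Δ`, is the unique minimizer of `E*` over `Δ`, its value is `E*(p₀) = −𝔼[max_i ε⁽ⁱ⁾]`, and
`E*(p) ≥ −𝔼[max_i ε⁽ⁱ⁾]` for all `p ∈ Δ`. -/
theorem prox_center_lower_bound
    (n : ℕ) (hn : 2 ≤ n)
    (μ : Measure (Fin n → ℝ)) [IsProbabilityMeasure μ]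
    (hint : ∀ i : Fin n, Integrable (fun x : Fin n → ℝ => x i) μ)
    (hac : μ ≪ (volume : Measure (Fin n → ℝ)))
    (hsupp : ∀ U : Set (Fin n → ℝ), IsOpen U → U.Nonempty → 0 < μ U)
    (E : (Fin n → ℝ) → ℝ)
    (hE : ∀ u : Fin n → ℝ, E u = ∫ x, (⨆ i : Fin n, (u i + x i)) ∂μ)
    (Estar : (Fin n → ℝ) → ℝ)
    (hEstar : ∀ p : Fin n → ℝ,
      Estar p = sSup {y : ℝ | ∃ u : Fin n → ℝ, y = ∑ i, p i * u i - E u})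
    (β : ℝ) (hβ : 0 < β)
    (hsc : ∀ p ∈ {p : Fin n → ℝ | ∑ i, p i = 1 ∧ ∀ i, 0 ≤ p i},
      ∀ q ∈ {p : Fin n → ℝ | ∑ i, p i = 1 ∧ ∀ i, 0 ≤ p i},
      ∀ α ∈ Set.Icc (0 : ℝ) 1,
        Estar (α • p + (1 - α) • q)
          ≤ α * Estar p + (1 - α) * Estar q
            - β / 2 * α * (1 - α) * (∑ i, |p i - q i|) ^ 2)
    (p0 : Fin n → ℝ)
    (hp0 : ∀ i, p0 i = (μ {x : Fin n → ℝ | ∀ j, x j ≤ x i}).toReal) :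
    p0 ∈ {p : Fin n → ℝ | ∑ i, p i = 1 ∧ ∀ i, 0 ≤ p i} ∧
    (∀ p ∈ {p : Fin n → ℝ | ∑ i, p i = 1 ∧ ∀ i, 0 ≤ p i}, Estar p0 ≤ Estar p) ∧
    (∀ p ∈ {p : Fin n → ℝ | ∑ i, p i = 1 ∧ ∀ i, 0 ≤ p i}, p ≠ p0 →
      Estar p0 < Estar p) ∧
    Estar p0 = -∫ x, (⨆ i : Fin n, x i) ∂μ ∧
    (∀ p ∈ {p : Fin n → ℝ | ∑ i, p i = 1 ∧ ∀ i, 0 ≤ p i},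
      -∫ x, (⨆ i : Fin n, x i) ∂μ ≤ Estar p) :=
  prox_center_lower_bound_general n hn μ hint hac E hE Estar hEstar β hβ hsc p0 hp0
end
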